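/- arXiv:1310.1110 — 2 statements merged into one kernel-verified Lean document; each statement's English description precedes it below -/
import Mathlib

section
/- Let ρ_AB, ρ_BC, ρ_AC be three compatible fully classical bipartite states whose single-party reduced states ρ_A, ρ_B, ρ_C all have nondegenerate spectra (all eigenvalues simple). Then there exists a fully classical tripartite state whose two-body reductions are ρ_AB, ρ_BC, ρ_AC. -/
open Matrix BigOperators
open scoped Kronecker ComplexOrder

namespace QMarginal

abbrev Mat (n : ℕ) := Matrix (Fin n) (Fin n) ℂ
abbrev Bip (m n : ℕ) := Matrix (Fin m × Fin n) (Fin m × Fin n) ℂ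
abbrev Tri (dA dB dC : ℕ) := Matrix (Fin dA × Fin dB × Fin dC) (Fin dA × Fin dB × Fin dC) ℂ

/-- partial trace over the third system -/
noncomputable def trC {dA dB dC : ℕ} (ρ : Tri dA dB dC) : Bip dA dB :=
  fun x y => ∑ c : Fin dC, ρ (x.1, x.2, c) (y.1, y.2, c)

/-- partial trace over the second system -/
noncomputable def trB {dA dB dC : ℕ} (ρ : Tri dA dB dC) : Bip dA dC :=
  fun x y => ∑ b : Fin dB, ρ (x.1, b, x.2) (y.1, b, y.2)

/-- partial trace over the first system -/
noncomputable def trA {dA dB dC : ℕ} (ρ : Tri dA dB dC) : Bip dB dC :=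
  fun x y => ∑ a : Fin dA, ρ (a, x.1, x.2) (a, y.1, y.2)

/-- partial trace of a bipartite matrix over the right factor -/
noncomputable def trR {m n : ℕ} (ρ : Bip m n) : Mat m :=
  fun i j => ∑ b : Fin n, ρ (i, b) (j, b)

/-- partial trace of a bipartite matrix over the left factor -/
noncomputable def trL {m n : ℕ} (ρ : Bip m n) : Mat n :=
  fun i j => ∑ a : Fin m, ρ (a, i) (a, j)

def IsDensity {ι : Type*} [Fintype ι] [DecidableEq ι] (ρ : Matrix ι ι ℂ) : Prop :=
  ρ.PosSemidef ∧ ρ.trace = 1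

/-- rank-one projector onto a vector -/
def projV {ι : Type*} (v : ι → ℂ) : Matrix ι ι ℂ := fun i j => v i * star (v j)

def prod2 {m n : ℕ} (v : Fin m → ℂ) (w : Fin n → ℂ) : Fin m × Fin n → ℂ :=
  fun x => v x.1 * w x.2

def prod3 {dA dB dC : ℕ} (u : Fin dA → ℂ) (v : Fin dB → ℂ) (w : Fin dC → ℂ) :
    Fin dA × Fin dB × Fin dC → ℂ :=
  fun x => u x.1 * v x.2.1 * w x.2.2

/-- a family of vectors forming an orthonormal basis -/
def ONB {n : ℕ} (a : Fin n → Fin n → ℂ) : Prop :=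
  ∀ i j, (∑ k, star (a i k) * a j k) = if i = j then (1:ℂ) else 0

/-- fully classical bipartite state -/
def FullyClassical {m n : ℕ} (ρ : Bip m n) : Prop :=
  ∃ (a : Fin m → Fin m → ℂ) (b : Fin n → Fin n → ℂ) (p : Fin m → Fin n → ℝ),
    ONB a ∧ ONB b ∧ (∀ i j, 0 ≤ p i j) ∧
    ρ = ∑ i, ∑ j, (p i j) • projV (prod2 (a i) (b j))

/-- fully classical tripartite state -/
def FullyClassicalTri {dA dB dC : ℕ} (ρ : Tri dA dB dC) : Prop :=
  ∃ (a : Fin dA → Fin dA → ℂ) (b : Fin dB → Fin dB → ℂ) (c : Fin dC → Fin dC → ℂ)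
    (f : Fin dA → Fin dB → Fin dC → ℝ),
    ONB a ∧ ONB b ∧ ONB c ∧ (∀ i j k, 0 ≤ f i j k) ∧
    ρ = ∑ i, ∑ j, ∑ k, (f i j k) • projV (prod3 (a i) (b j) (c k))

/-- fully separable tripartite state -/
def FullySepTri {dA dB dC : ℕ} (ρ : Tri dA dB dC) : Prop :=
  ∃ (N : ℕ) (p : Fin N → ℝ) (u : Fin N → Fin dA → ℂ) (v : Fin N → Fin dB → ℂ)
    (w : Fin N → Fin dC → ℂ),
    (∀ i, 0 ≤ p i) ∧ ρ = ∑ i, (p i) • projV (prod3 (u i) (v i) (w i))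

/-- M ⊗ I_C on the tripartite space, M acting on A ⊗ B -/
def embAB {dA dB : ℕ} (M : Bip dA dB) (dC : ℕ) : Tri dA dB dC :=
  fun x y => M (x.1, x.2.1) (y.1, y.2.1) * (if x.2.2 = y.2.2 then 1 else 0)

/-- M ⊗ I_B on the tripartite space, M acting on A ⊗ C -/
def embAC {dA dC : ℕ} (M : Bip dA dC) (dB : ℕ) : Tri dA dB dC :=
  fun x y => M (x.1, x.2.2) (y.1, y.2.2) * (if x.2.1 = y.2.1 then 1 else 0)

/-- M ⊗ I_A on the tripartite space, M acting on B ⊗ C -/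
def embBC {dB dC : ℕ} (M : Bip dB dC) (dA : ℕ) : Tri dA dB dC :=
  fun x y => M (x.2.1, x.2.2) (y.2.1, y.2.2) * (if x.1 = y.1 then 1 else 0)

/-- a matrix has a repeated eigenvalue -/
def Degenerate {n : ℕ} (ρ : Mat n) : Prop :=
  ∃ (μ : ℂ) (v w : Fin n → ℂ), LinearIndependent ℂ ![v, w] ∧
    ρ *ᵥ v = μ • v ∧ ρ *ᵥ w = μ • w

/-!
The one-party marginals are diagonal in the bases coming from both bipartite states containing
that party, e.g. `ρ_A = ∑ i, (∑ j, p i j) |a i⟩⟨a i| = ∑ i, (∑ k, q i k) |a' i⟩⟨a' i|`. Since the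
spectrum of `ρ_A` is simple, the `a' i` are the `a i` up to order and phases, and likewise for `B`
and `C`; so the three bipartite states are diagonal in products of one triple of bases `a, b, c`.
Dephasing `ρ_ABC` in the basis `a ⊗ b ⊗ c` gives a fully classical state. Dephasing commutes with
partial traces and fixes states that are already diagonal, so this state has the given two-body
marginals.
-/

section Vectors

variable {ι : Type*}

lemma projV_mulVec [Fintype ι] (v w : ι → ℂ) : projV v *ᵥ w = (star v ⬝ᵥ w) • v := by
  ext x
  simp [projV, mulVec, dotProduct, Finset.mul_sum, mul_comm, mul_left_comm]

lemma dotProduct_projV_mulVec [Fintype ι] (u v : ι → ℂ) :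
    star u ⬝ᵥ projV v *ᵥ u = (star u ⬝ᵥ v) * (star v ⬝ᵥ u) := by
  rw [projV_mulVec, dotProduct_smul, smul_eq_mul, mul_comm]

lemma posSemidef_projV [Fintype ι] [DecidableEq ι] (v : ι → ℂ) : (projV v).PosSemidef :=
  posSemidef_vecMulVec_self_star v

lemma projV_smul {t : ℂ} (ht : star t * t = 1) (v : ι → ℂ) : projV (t • v) = projV v := by
  funext x y
  simp only [projV, Pi.smul_apply, smul_eq_mul, star_mul']
  linear_combination (v x * star (v y)) * ht

lemma sum_dotProduct_mulVec {κ : Type*} [Fintype ι] [Fintype κ] (M : Matrix ι ι ℂ)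
    (x : κ → ι → ℂ) :
    ∑ k, star (x k) ⬝ᵥ M *ᵥ x k = ∑ p, ∑ q, (∑ k, star (x k p) * x k q) * M p q := by
  simp only [dotProduct, mulVec, Pi.star_apply, Finset.mul_sum, Finset.sum_mul]
  rw [Finset.sum_comm]
  refine Finset.sum_congr rfl fun p _ => ?_
  rw [Finset.sum_comm]
  exact Finset.sum_congr rfl fun q _ => Finset.sum_congr rfl fun k _ => by ring

lemma re_dotProduct_mulVec_nonneg [Fintype ι] {M : Matrix ι ι ℂ}
    (hM : M.PosSemidef) (x : ι → ℂ) : 0 ≤ (star x ⬝ᵥ M *ᵥ x).re :=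
  (Complex.nonneg_iff.mp (hM.dotProduct_mulVec_nonneg x)).1

end Vectors

lemma exists_smul_eq_of_not_degenerate {n : ℕ} {ρ : Mat n} (hnd : ¬ Degenerate ρ) {μ : ℂ}
    {v w : Fin n → ℂ} (hv : ρ *ᵥ v = μ • v) (hw : ρ *ᵥ w = μ • w) (hv0 : v ≠ 0) :
    ∃ c : ℂ, c • v = w := by
  by_contra! h
  exact hnd ⟨μ, v, w, (LinearIndependent.pair_iff' hv0).2 h, hv, hw⟩

namespace ONB

variable {n : ℕ} {a : Fin n → Fin n → ℂ}

lemma dotProduct_eq (ha : ONB a) (i j : Fin n) :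
    star (a i) ⬝ᵥ a j = if i = j then 1 else 0 :=
  ha i j

lemma dotProduct_self (ha : ONB a) (i : Fin n) : star (a i) ⬝ᵥ a i = 1 := by
  simp [ha.dotProduct_eq]

lemma sum_star_mul (ha : ONB a) (x y : Fin n) :
    ∑ i, star (a i x) * a i y = if x = y then 1 else 0 := by
  have hU : of a * (of a)ᴴ = 1 := by
    ext i j
    simp only [mul_apply, of_apply, conjTranspose_apply, one_apply, mul_comm (a i _)]
    rw [ha j i]
    exact if_congr eq_comm rfl rfl
  simpa [mul_apply, one_apply] using congrArg (· x y) (mul_eq_one_comm.mp hU)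

lemma sum_dotProduct_smul (ha : ONB a) (v : Fin n → ℂ) :
    ∑ j, (star (a j) ⬝ᵥ v) • a j = v := by
  ext y
  simp only [Finset.sum_apply, Pi.smul_apply, smul_eq_mul, dotProduct, Pi.star_apply,
    Finset.sum_mul]
  rw [Finset.sum_comm]
  simp_rw [mul_right_comm _ (v _), ← Finset.sum_mul, ha.sum_star_mul]
  simp

lemma sum_smul_projV_mulVec (ha : ONB a) (s : Fin n → ℝ) (i : Fin n) :
    (∑ m, s m • projV (a m)) *ᵥ a i = (s i : ℂ) • a i := by
  simp [sum_mulVec, smul_mulVec, projV_mulVec, ha.dotProduct_eq, Complex.coe_smul]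

lemma dotProduct_sum_smul_projV_mulVec (ha : ONB a) (s : Fin n → ℝ) (j : Fin n)
    (v : Fin n → ℂ) :
    star (a j) ⬝ᵥ (∑ m, s m • projV (a m)) *ᵥ v = s j * (star (a j) ⬝ᵥ v) := by
  simp [sum_mulVec, smul_mulVec, projV_mulVec, dotProduct_sum, ha.dotProduct_eq, mul_comm]

lemma injective_projV (ha : ONB a) : Function.Injective fun i => projV (a i) := by
  intro i j hij
  by_contra hne
  have h := congrArg (· *ᵥ a i) hij
  simp only [projV_mulVec, ha.dotProduct_self, ha.dotProduct_eq j i, if_neg (Ne.symm hne),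
    one_smul, zero_smul] at h
  simpa [h] using ha.dotProduct_self i

variable {a' : Fin n → Fin n → ℂ}

lemma exists_projV_eq (ha : ONB a) (ha' : ONB a') {ρ : Mat n} (hnd : ¬ Degenerate ρ)
    {s t : Fin n → ℝ} (hs : ρ = ∑ i, s i • projV (a i)) (ht : ρ = ∑ k, t k • projV (a' k))
    (k : Fin n) : ∃ j, projV (a' k) = projV (a j) := by
  obtain ⟨j, hj⟩ : ∃ j, star (a j) ⬝ᵥ a' k ≠ 0 := by
    by_contra! h
    have h0 : a' k = 0 := by rw [← ha.sum_dotProduct_smul (a' k)]; simp [h]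
    simpa [h0] using ha'.dotProduct_self k
  -- `a' k` is a `t k`-eigenvector overlapping `a j`, which is an `s j`-eigenvector
  have hst : (s j : ℂ) = t k := by
    have h := ha.dotProduct_sum_smul_projV_mulVec s j (a' k)
    rw [← hs, ht, ha'.sum_smul_projV_mulVec, dotProduct_smul, smul_eq_mul] at h
    exact (mul_right_cancel₀ hj h).symm
  have hj0 : a j ≠ 0 := fun h0 => by simpa [h0] using ha.dotProduct_self j
  obtain ⟨c, hc⟩ := exists_smul_eq_of_not_degenerate hnd
    (by rw [hs, ha.sum_smul_projV_mulVec]) (by rw [ht, ha'.sum_smul_projV_mulVec, ← hst]) hj0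
  have hcc : star c * c = 1 := by
    simpa [← hc, dotProduct_smul, smul_dotProduct, ha.dotProduct_self, mul_comm] using
      ha'.dotProduct_self k
  exact ⟨j, by rw [← hc, projV_smul hcc]⟩

lemma exists_perm_projV_eq (ha : ONB a) (ha' : ONB a') {ρ : Mat n} (hnd : ¬ Degenerate ρ)
    {s t : Fin n → ℝ} (hs : ρ = ∑ i, s i • projV (a i)) (ht : ρ = ∑ k, t k • projV (a' k)) :
    ∃ e : Equiv.Perm (Fin n), ∀ k, projV (a' k) = projV (a (e k)) := by
  choose g hg using ha.exists_projV_eq ha' hnd hs ht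
  have hinj : Function.Injective g := fun k l hkl =>
    ha'.injective_projV (show projV (a' k) = projV (a' l) by rw [hg k, hg l, hkl])
  exact ⟨Equiv.ofBijective g hinj.bijective_of_finite, hg⟩

end ONB

section Bipartite

variable {m n : ℕ}

lemma trR_sum {κ : Type*} (s : Finset κ) (M : κ → Bip m n) :
    trR (∑ k ∈ s, M k) = ∑ k ∈ s, trR (M k) := by
  ext; simp only [trR, Matrix.sum_apply]; exact Finset.sum_comm

lemma trL_sum {κ : Type*} (s : Finset κ) (M : κ → Bip m n) :
    trL (∑ k ∈ s, M k) = ∑ k ∈ s, trL (M k) := by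
  ext; simp only [trL, Matrix.sum_apply]; exact Finset.sum_comm

lemma trR_smul (r : ℝ) (M : Bip m n) : trR (r • M) = r • trR M := by
  ext; simp only [trR, Matrix.smul_apply, Finset.smul_sum]

lemma trL_smul (r : ℝ) (M : Bip m n) : trL (r • M) = r • trL M := by
  ext; simp only [trL, Matrix.smul_apply, Finset.smul_sum]

lemma trR_projV_prod2 {v : Fin m → ℂ} {w : Fin n → ℂ} (hw : star w ⬝ᵥ w = 1) :
    trR (projV (prod2 v w)) = projV v := by
  ext x y
  simp only [trR, projV, prod2, star_mul']
  rw [← one_mul (v x * _), ← hw, dotProduct, Finset.sum_mul]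
  exact Finset.sum_congr rfl fun _ _ => by simp only [Pi.star_apply]; ring

lemma trL_projV_prod2 {v : Fin m → ℂ} {w : Fin n → ℂ} (hv : star v ⬝ᵥ v = 1) :
    trL (projV (prod2 v w)) = projV w := by
  ext x y
  simp only [trL, projV, prod2, star_mul']
  rw [← one_mul (w x * _), ← hv, dotProduct, Finset.sum_mul]
  exact Finset.sum_congr rfl fun _ _ => by simp only [Pi.star_apply]; ring

lemma dotProduct_prod2 (u u' : Fin m → ℂ) (w w' : Fin n → ℂ) :
    star (prod2 u w) ⬝ᵥ prod2 u' w' = (star u ⬝ᵥ u') * (star w ⬝ᵥ w') := by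
  simp only [dotProduct, Fintype.sum_prod_type, Finset.sum_mul_sum, prod2, Pi.star_apply,
    star_mul']
  exact Finset.sum_congr rfl fun _ _ => Finset.sum_congr rfl fun _ _ => by ring

lemma projV_prod2_congr {u u' : Fin m → ℂ} {w w' : Fin n → ℂ} (hu : projV u = projV u')
    (hw : projV w = projV w') : projV (prod2 u w) = projV (prod2 u' w') := by
  have h (u : Fin m → ℂ) (w : Fin n → ℂ) (x y : Fin m × Fin n) :
      projV (prod2 u w) x y = projV u x.1 y.1 * projV w x.2 y.2 := by
    simp only [projV, prod2, star_mul']; ring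
  ext x y
  rw [h, h, hu, hw]

variable {a : Fin m → Fin m → ℂ} {b : Fin n → Fin n → ℂ}

lemma trR_sum_smul_projV_prod2 (hb : ONB b) (p : Fin m → Fin n → ℝ) :
    trR (∑ i, ∑ j, p i j • projV (prod2 (a i) (b j))) = ∑ i, (∑ j, p i j) • projV (a i) := by
  simp only [trR_sum, trR_smul, trR_projV_prod2 (hb.dotProduct_self _), Finset.sum_smul]

lemma trL_sum_smul_projV_prod2 (ha : ONB a) (p : Fin m → Fin n → ℝ) :
    trL (∑ i, ∑ j, p i j • projV (prod2 (a i) (b j))) = ∑ j, (∑ i, p i j) • projV (b j) := by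
  simp only [trL_sum, trL_smul, trL_projV_prod2 (ha.dotProduct_self _), Finset.sum_smul]
  exact Finset.sum_comm

lemma sum_smul_projV_prod2_perm {a' : Fin m → Fin m → ℂ} {b' : Fin n → Fin n → ℂ}
    {e : Equiv.Perm (Fin m)} {e' : Equiv.Perm (Fin n)} (he : ∀ i, projV (a' i) = projV (a (e i)))
    (he' : ∀ j, projV (b' j) = projV (b (e' j))) (p : Fin m → Fin n → ℝ) :
    ∑ i, ∑ j, p i j • projV (prod2 (a' i) (b' j))
      = ∑ i, ∑ j, p (e.symm i) (e'.symm j) • projV (prod2 (a i) (b j)) := by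
  simp only [projV_prod2_congr (he _) (he' _)]
  exact Fintype.sum_equiv e _ _ fun i => Fintype.sum_equiv e' _ _ fun j => by
    simp only [Equiv.symm_apply_apply]

lemma dotProduct_sum_smul_projV_prod2 (ha : ONB a) (hb : ONB b) (p : Fin m → Fin n → ℝ)
    (i : Fin m) (j : Fin n) :
    star (prod2 (a i) (b j)) ⬝ᵥ (∑ i', ∑ j', p i' j' • projV (prod2 (a i') (b j'))) *ᵥ
      prod2 (a i) (b j) = p i j := by
  simp [sum_mulVec, smul_mulVec, dotProduct_sum, dotProduct_projV_mulVec, dotProduct_prod2,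
    ha.dotProduct_eq, hb.dotProduct_eq]

noncomputable def dephase2 (a : Fin m → Fin m → ℂ) (b : Fin n → Fin n → ℂ) (ρ : Bip m n) :
    Bip m n :=
  ∑ i, ∑ j, (star (prod2 (a i) (b j)) ⬝ᵥ ρ *ᵥ prod2 (a i) (b j)).re • projV (prod2 (a i) (b j))

lemma dephase2_sum_smul_projV_prod2 (ha : ONB a) (hb : ONB b) (p : Fin m → Fin n → ℝ) :
    dephase2 a b (∑ i, ∑ j, p i j • projV (prod2 (a i) (b j)))
      = ∑ i, ∑ j, p i j • projV (prod2 (a i) (b j)) := by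
  simp only [dephase2, dotProduct_sum_smul_projV_prod2 ha hb, Complex.ofReal_re]

end Bipartite

section Tripartite

variable {dA dB dC : ℕ} (ρ : Tri dA dB dC)

lemma trC_sum {κ : Type*} (s : Finset κ) (M : κ → Tri dA dB dC) :
    trC (∑ k ∈ s, M k) = ∑ k ∈ s, trC (M k) := by
  ext; simp only [trC, Matrix.sum_apply]; exact Finset.sum_comm

lemma trB_sum {κ : Type*} (s : Finset κ) (M : κ → Tri dA dB dC) :
    trB (∑ k ∈ s, M k) = ∑ k ∈ s, trB (M k) := by
  ext; simp only [trB, Matrix.sum_apply]; exact Finset.sum_comm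

lemma trA_sum {κ : Type*} (s : Finset κ) (M : κ → Tri dA dB dC) :
    trA (∑ k ∈ s, M k) = ∑ k ∈ s, trA (M k) := by
  ext; simp only [trA, Matrix.sum_apply]; exact Finset.sum_comm

lemma trC_smul (r : ℝ) : trC (r • ρ) = r • trC ρ := by
  ext; simp only [trC, Matrix.smul_apply, Finset.smul_sum]

lemma trB_smul (r : ℝ) : trB (r • ρ) = r • trB ρ := by
  ext; simp only [trB, Matrix.smul_apply, Finset.smul_sum]

lemma trA_smul (r : ℝ) : trA (r • ρ) = r • trA ρ := by
  ext; simp only [trA, Matrix.smul_apply, Finset.smul_sum]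

variable {u : Fin dA → ℂ} {v : Fin dB → ℂ} {w : Fin dC → ℂ}

lemma trC_projV_prod3 (hw : star w ⬝ᵥ w = 1) :
    trC (projV (prod3 u v w)) = projV (prod2 u v) := by
  ext x y
  simp only [trC, projV, prod3, prod2, star_mul']
  rw [← one_mul (u x.1 * v x.2 * _), ← hw, dotProduct, Finset.sum_mul]
  exact Finset.sum_congr rfl fun _ _ => by simp only [Pi.star_apply]; ring

lemma trB_projV_prod3 (hv : star v ⬝ᵥ v = 1) :
    trB (projV (prod3 u v w)) = projV (prod2 u w) := by
  ext x y
  simp only [trB, projV, prod3, prod2, star_mul']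
  rw [← one_mul (u x.1 * w x.2 * _), ← hv, dotProduct, Finset.sum_mul]
  exact Finset.sum_congr rfl fun _ _ => by simp only [Pi.star_apply]; ring

lemma trA_projV_prod3 (hu : star u ⬝ᵥ u = 1) :
    trA (projV (prod3 u v w)) = projV (prod2 v w) := by
  ext x y
  simp only [trA, projV, prod3, prod2, star_mul']
  rw [← one_mul (v x.1 * w x.2 * _), ← hu, dotProduct, Finset.sum_mul]
  exact Finset.sum_congr rfl fun _ _ => by simp only [Pi.star_apply]; ring

lemma sum_dotProduct_mulVec_prod3_right {c : Fin dC → Fin dC → ℂ} (hc : ONB c) :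
    ∑ k, star (prod3 u v (c k)) ⬝ᵥ ρ *ᵥ prod3 u v (c k)
      = star (prod2 u v) ⬝ᵥ trC ρ *ᵥ prod2 u v := by
  have key (x y : Fin dA × Fin dB × Fin dC) : ∑ k, star (prod3 u v (c k) x) * prod3 u v (c k) y
      = if x.2.2 = y.2.2 then star (u x.1 * v x.2.1) * (u y.1 * v y.2.1) else 0 := by
    have h (k : Fin dC) : star (prod3 u v (c k) x) * prod3 u v (c k) y
        = star (c k x.2.2) * c k y.2.2 * (star (u x.1 * v x.2.1) * (u y.1 * v y.2.1)) := by
      simp only [prod3, star_mul']; ring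
    simp only [h, ← Finset.sum_mul, hc.sum_star_mul, ite_mul, one_mul, zero_mul]
  rw [sum_dotProduct_mulVec]
  simp only [key, dotProduct, mulVec, trC, prod2, Fintype.sum_prod_type, Finset.mul_sum,
    Finset.sum_mul, Pi.star_apply, ite_mul, zero_mul, Finset.sum_ite_eq, Finset.mem_univ, if_true]
  simp_rw [Finset.sum_comm (s := (Finset.univ : Finset (Fin dC)))]
  simp only [mul_assoc, mul_comm, mul_left_comm]

lemma sum_dotProduct_mulVec_prod3_middle {b : Fin dB → Fin dB → ℂ} (hb : ONB b) :
    ∑ k, star (prod3 u (b k) w) ⬝ᵥ ρ *ᵥ prod3 u (b k) w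
      = star (prod2 u w) ⬝ᵥ trB ρ *ᵥ prod2 u w := by
  have key (x y : Fin dA × Fin dB × Fin dC) : ∑ k, star (prod3 u (b k) w x) * prod3 u (b k) w y
      = if x.2.1 = y.2.1 then star (u x.1 * w x.2.2) * (u y.1 * w y.2.2) else 0 := by
    have h (k : Fin dB) : star (prod3 u (b k) w x) * prod3 u (b k) w y
        = star (b k x.2.1) * b k y.2.1 * (star (u x.1 * w x.2.2) * (u y.1 * w y.2.2)) := by
      simp only [prod3, star_mul']; ring
    simp only [h, ← Finset.sum_mul, hb.sum_star_mul, ite_mul, one_mul, zero_mul]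
  rw [sum_dotProduct_mulVec]
  simp only [key, dotProduct, mulVec, trB, prod2, Fintype.sum_prod_type, Finset.mul_sum,
    Finset.sum_mul, Pi.star_apply, ite_mul, zero_mul, Finset.sum_ite_irrel, Finset.sum_const_zero,
    Finset.sum_ite_eq, Finset.mem_univ, if_true]
  refine Finset.sum_congr rfl fun _ _ => ?_
  simp_rw [Finset.sum_comm (s := (Finset.univ : Finset (Fin dB)))]
  simp only [mul_assoc, mul_comm, mul_left_comm]

lemma sum_dotProduct_mulVec_prod3_left {a : Fin dA → Fin dA → ℂ} (ha : ONB a) :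
    ∑ k, star (prod3 (a k) v w) ⬝ᵥ ρ *ᵥ prod3 (a k) v w
      = star (prod2 v w) ⬝ᵥ trA ρ *ᵥ prod2 v w := by
  have key (x y : Fin dA × Fin dB × Fin dC) : ∑ k, star (prod3 (a k) v w x) * prod3 (a k) v w y
      = if x.1 = y.1 then star (v x.2.1 * w x.2.2) * (v y.2.1 * w y.2.2) else 0 := by
    have h (k : Fin dA) : star (prod3 (a k) v w x) * prod3 (a k) v w y
        = star (a k x.1) * a k y.1 * (star (v x.2.1 * w x.2.2) * (v y.2.1 * w y.2.2)) := by
      simp only [prod3, star_mul']; ring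
    simp only [h, ← Finset.sum_mul, ha.sum_star_mul, ite_mul, one_mul, zero_mul]
  rw [sum_dotProduct_mulVec]
  simp only [key, dotProduct, mulVec, trA, prod2, Fintype.sum_prod_type, Finset.mul_sum,
    Finset.sum_mul, Pi.star_apply, ite_mul, zero_mul, Finset.sum_ite_irrel, Finset.sum_const_zero,
    Finset.sum_ite_eq, Finset.mem_univ, if_true]
  simp_rw [Finset.sum_comm (s := (Finset.univ : Finset (Fin dA)))]
  simp only [mul_assoc, mul_comm, mul_left_comm]

lemma trR_trC : trR (trC ρ) = trR (trB ρ) := Matrix.ext fun _ _ => Finset.sum_comm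

lemma trL_trC : trL (trC ρ) = trR (trA ρ) := Matrix.ext fun _ _ => Finset.sum_comm

lemma trL_trB : trL (trB ρ) = trL (trA ρ) := Matrix.ext fun _ _ => Finset.sum_comm

lemma trace_trC : (trC ρ).trace = ρ.trace := by
  simp only [trace, diag, trC, Fintype.sum_prod_type]

variable {a : Fin dA → Fin dA → ℂ} {b : Fin dB → Fin dB → ℂ} {c : Fin dC → Fin dC → ℂ}

noncomputable def dephase3 (a : Fin dA → Fin dA → ℂ) (b : Fin dB → Fin dB → ℂ)
    (c : Fin dC → Fin dC → ℂ) (ρ : Tri dA dB dC) : Tri dA dB dC :=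
  ∑ i, ∑ j, ∑ k, (star (prod3 (a i) (b j) (c k)) ⬝ᵥ ρ *ᵥ prod3 (a i) (b j) (c k)).re •
    projV (prod3 (a i) (b j) (c k))

variable {ρ} in
lemma posSemidef_dephase3 (hρ : ρ.PosSemidef) : (dephase3 a b c ρ).PosSemidef :=
  posSemidef_sum _ fun _ _ => posSemidef_sum _ fun _ _ => posSemidef_sum _ fun _ _ =>
    (posSemidef_projV _).smul (re_dotProduct_mulVec_nonneg hρ _)

variable {ρ} in
lemma fullyClassicalTri_dephase3 (ha : ONB a) (hb : ONB b) (hc : ONB c) (hρ : ρ.PosSemidef) :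
    FullyClassicalTri (dephase3 a b c ρ) :=
  ⟨a, b, c, _, ha, hb, hc, fun _ _ _ => re_dotProduct_mulVec_nonneg hρ _, rfl⟩

lemma trC_dephase3 (hc : ONB c) : trC (dephase3 a b c ρ) = dephase2 a b (trC ρ) := by
  simp only [dephase3, dephase2, trC_sum, trC_smul, trC_projV_prod3 (hc.dotProduct_self _),
    ← Finset.sum_smul, ← Complex.re_sum, sum_dotProduct_mulVec_prod3_right ρ hc]

lemma trB_dephase3 (hb : ONB b) : trB (dephase3 a b c ρ) = dephase2 a c (trB ρ) := by
  simp only [dephase3, dephase2, trB_sum, trB_smul, trB_projV_prod3 (hb.dotProduct_self _)]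
  refine Finset.sum_congr rfl fun i _ => ?_
  rw [Finset.sum_comm]
  simp only [← Finset.sum_smul, ← Complex.re_sum, sum_dotProduct_mulVec_prod3_middle ρ hb]

lemma trA_dephase3 (ha : ONB a) : trA (dephase3 a b c ρ) = dephase2 b c (trA ρ) := by
  simp only [dephase3, dephase2, trA_sum, trA_smul, trA_projV_prod3 (ha.dotProduct_self _)]
  rw [Finset.sum_comm]
  refine Finset.sum_congr rfl fun j _ => ?_
  rw [Finset.sum_comm]
  simp only [← Finset.sum_smul, ← Complex.re_sum, sum_dotProduct_mulVec_prod3_left ρ ha]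

end Tripartite

/-- compatible fully classical bipartite states with nondegenerate
one-party marginals are compatible with a fully classical tripartite state. -/
theorem stmt_6 {dA dB dC : ℕ}
    (ρAB : Bip dA dB) (ρAC : Bip dA dC) (ρBC : Bip dB dC)
    (hfcAB : FullyClassical ρAB) (hfcAC : FullyClassical ρAC)
    (hfcBC : FullyClassical ρBC)
    (ρABC : Tri dA dB dC) (hρ : IsDensity ρABC)
    (hAB : trC ρABC = ρAB) (hAC : trB ρABC = ρAC) (hBC : trA ρABC = ρBC)
    (hndA : ¬ Degenerate (trR ρAB)) (hndB : ¬ Degenerate (trL ρAB))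
    (hndC : ¬ Degenerate (trL ρAC)) :
    ∃ σ : Tri dA dB dC, IsDensity σ ∧ FullyClassicalTri σ ∧
      trC σ = ρAB ∧ trB σ = ρAC ∧ trA σ = ρBC := by
  obtain ⟨a, b, p, ha, hb, -, hpAB⟩ := hfcAB
  obtain ⟨a', c, q, ha', hc, -, hqAC⟩ := hfcAC
  obtain ⟨b', c', r, hb', hc', -, hrBC⟩ := hfcBC
  subst hAB hAC hBC
  obtain ⟨eA, heA⟩ := ha.exists_perm_projV_eq ha' hndA
    (by rw [hpAB, trR_sum_smul_projV_prod2 hb])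
    (by rw [trR_trC, hqAC, trR_sum_smul_projV_prod2 hc])
  obtain ⟨eB, heB⟩ := hb.exists_perm_projV_eq hb' hndB
    (by rw [hpAB, trL_sum_smul_projV_prod2 ha])
    (by rw [trL_trC, hrBC, trR_sum_smul_projV_prod2 hc'])
  obtain ⟨eC, heC⟩ := hc.exists_perm_projV_eq hc' hndC
    (by rw [hqAC, trL_sum_smul_projV_prod2 ha'])
    (by rw [trL_trB, hrBC, trL_sum_smul_projV_prod2 hb'])
  have hdAB : dephase2 a b (trC ρABC) = trC ρABC := by
    rw [hpAB, dephase2_sum_smul_projV_prod2 ha hb]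
  have hdAC : dephase2 a c (trB ρABC) = trB ρABC := by
    rw [hqAC, sum_smul_projV_prod2_perm (e' := Equiv.refl _) heA fun _ => rfl,
      dephase2_sum_smul_projV_prod2 ha hc]
  have hdBC : dephase2 b c (trA ρABC) = trA ρABC := by
    rw [hrBC, sum_smul_projV_prod2_perm heB heC, dephase2_sum_smul_projV_prod2 hb hc]
  refine ⟨dephase3 a b c ρABC, ⟨posSemidef_dephase3 hρ.1, ?_⟩,
    fullyClassicalTri_dephase3 ha hb hc hρ.1, by rw [trC_dephase3 ρABC hc, hdAB],
    by rw [trB_dephase3 ρABC hb, hdAC], by rw [trA_dephase3 ρABC ha, hdBC]⟩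
  rw [← trace_trC, trC_dephase3 ρABC hc, hdAB, trace_trC, hρ.2]
end QMarginal
end

section
/- The range of the three-qubit state ω_ABC = (1/8)(I⊗I⊗I + (1/√3)(I⊗σ_1⊗σ_1 + σ_2⊗I⊗σ_2 + σ_3⊗σ_3⊗I)) contains no product vector |α⟩⊗|β⟩⊗|γ⟩ with |α⟩,|β⟩,|γ⟩ ∈ C^2 nonzero; consequently ω_ABC is not fully separable. -/
/-!
The correlation term `S = 1⊗σ₁⊗σ₁ + σ₂⊗1⊗σ₂ + σ₃⊗σ₃⊗1` squares to `3`, because its three terms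
pairwise anticommute. Hence `W = 1 - S/√3` annihilates `ω = (1 + S/√3)/8`, and the range of `ω`
lies in the kernel of `W`. On a product vector `α⊗β⊗γ` with Bloch vectors `a, b, c`,
`⟨W⟩ = N - (|α|² b₁c₁ + a₂|β|²c₂ + a₃b₃|γ|²)/√3` with `N = |α|²|β|²|γ|²`; since `|a| = |α|²` etc.,
AM-GM bounds the correlation by `3N/2 < √3 N`, so `⟨W⟩ > 0` on nonzero product vectors. Thus no
such vector lies in the kernel of `W`, and a separable decomposition `ω = Σ pᵢ |ψᵢ⟩⟨ψᵢ|` would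
give `0 = tr (W ω) = Σ pᵢ ⟨ψᵢ|W|ψᵢ⟩`, forcing `ω = 0`.
-/

open Matrix BigOperators
open scoped Kronecker ComplexOrder

namespace QMarginal

/-- the Pauli matrices -/
noncomputable def pauli : Fin 3 → Mat 2 :=
  ![!![0, 1; 1, 0], !![0, -Complex.I; Complex.I, 0], !![1, 0; 0, -1]]
/-- the three-qubit family ρ_ABC(q) of Example 1 -/
noncomputable def rhoQ (q : ℝ) : Tri 2 2 2 :=
  (1/8 : ℝ) • ((1 : Tri 2 2 2)
    + q • ((1 : Mat 2) ⊗ₖ (pauli 0 ⊗ₖ pauli 0))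
    + q • (pauli 1 ⊗ₖ ((1 : Mat 2) ⊗ₖ pauli 1))
    + q • (pauli 2 ⊗ₖ (pauli 2 ⊗ₖ (1 : Mat 2))))

lemma star_dotProduct_kronecker_mulVec {m n : Type*} [Fintype m] [Fintype n]
    (A : Matrix m m ℂ) (B : Matrix n n ℂ) (x : m → ℂ) (y : n → ℂ) :
    star (fun p : m × n => x p.1 * y p.2) ⬝ᵥ (A ⊗ₖ B) *ᵥ (fun p => x p.1 * y p.2)
      = (star x ⬝ᵥ A *ᵥ x) * (star y ⬝ᵥ B *ᵥ y) := by
  simp only [dotProduct, mulVec, Fintype.sum_prod_type, kroneckerMap_apply, Pi.star_apply,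
    star_mul', Finset.sum_mul_sum]
  refine Finset.sum_congr rfl fun a _ => Finset.sum_congr rfl fun b _ => ?_
  simp only [Finset.mul_sum, Finset.sum_mul]
  conv_rhs => rw [Finset.sum_comm]
  exact Finset.sum_congr rfl fun _ _ => Finset.sum_congr rfl fun _ _ => by ring

lemma star_prod3_dotProduct_kronecker_mulVec {dA dB dC : ℕ} (A : Mat dA) (B : Mat dB)
    (C : Mat dC) (u : Fin dA → ℂ) (v : Fin dB → ℂ) (w : Fin dC → ℂ) :
    star (prod3 u v w) ⬝ᵥ (A ⊗ₖ (B ⊗ₖ C)) *ᵥ prod3 u v w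
      = (star u ⬝ᵥ A *ᵥ u) * (star v ⬝ᵥ B *ᵥ v) * (star w ⬝ᵥ C *ᵥ w) := by
  have h : prod3 u v w = fun p => u p.1 * prod2 v w p.2 := by
    funext p; simp only [prod3, prod2, mul_assoc]
  rw [h, star_dotProduct_kronecker_mulVec]
  unfold prod2
  rw [star_dotProduct_kronecker_mulVec, mul_assoc]

lemma star_dotProduct_mulVec_self_eq_re {ι : Type*} [Fintype ι] {A : Matrix ι ι ℂ}
    (hA : A.IsHermitian) (u : ι → ℂ) : star u ⬝ᵥ A *ᵥ u = ((star u ⬝ᵥ A *ᵥ u).re : ℂ) :=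
  Complex.ext rfl (by simpa using hA.im_star_dotProduct_mulVec_self u)

noncomputable def sqNorm {ι : Type*} [Fintype ι] (u : ι → ℂ) : ℝ := (star u ⬝ᵥ u).re

lemma star_dotProduct_self_eq_sqNorm {ι : Type*} [Fintype ι] [DecidableEq ι] (u : ι → ℂ) :
    star u ⬝ᵥ u = sqNorm u := by
  simpa [sqNorm] using star_dotProduct_mulVec_self_eq_re isHermitian_one u

lemma sqNorm_pos {ι : Type*} [Fintype ι] {u : ι → ℂ} (hu : u ≠ 0) : 0 < sqNorm u :=
  (Complex.pos_iff.mp (dotProduct_star_self_pos_iff.mpr hu)).1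

lemma sqNorm_prod3 {dA dB dC : ℕ} (u : Fin dA → ℂ) (v : Fin dB → ℂ) (w : Fin dC → ℂ) :
    sqNorm (prod3 u v w) = sqNorm u * sqNorm v * sqNorm w := by
  have h := star_prod3_dotProduct_kronecker_mulVec (1 : Mat dA) (1 : Mat dB) (1 : Mat dC) u v w
  simp only [one_kronecker_one, one_mulVec, star_dotProduct_self_eq_sqNorm] at h
  exact_mod_cast h

lemma ne_zero_of_prod3_ne_zero {dA dB dC : ℕ} {u : Fin dA → ℂ} {v : Fin dB → ℂ}
    {w : Fin dC → ℂ} (h : prod3 u v w ≠ 0) : u ≠ 0 ∧ v ≠ 0 ∧ w ≠ 0 := by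
  refine ⟨?_, ?_, ?_⟩ <;> rintro rfl <;> exact h (funext fun _ => by simp [prod3])

lemma trace_mul_projV {ι : Type*} [Fintype ι] (M : Matrix ι ι ℂ) (v : ι → ℂ) :
    (M * projV v).trace = star v ⬝ᵥ M *ᵥ v := by
  simp only [Matrix.trace, Matrix.diag, Matrix.mul_apply, projV, Matrix.mulVec, dotProduct,
    Pi.star_apply, Finset.mul_sum]
  exact Finset.sum_congr rfl fun _ _ => Finset.sum_congr rfl fun _ _ => by ring

lemma sum_smul_projV_eq_zero_of_mul_eq_zero {ι : Type*} [Fintype ι] {N : ℕ}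
    {M : Matrix ι ι ℂ} {p : Fin N → ℝ} {v : Fin N → ι → ℂ} (hp : ∀ i, 0 ≤ p i)
    (hpos : ∀ i, v i ≠ 0 → 0 < (star (v i) ⬝ᵥ M *ᵥ v i).re)
    (hM : M * ∑ i, p i • projV (v i) = 0) : ∑ i, p i • projV (v i) = 0 := by
  have hterm_nonneg : ∀ i, 0 ≤ p i * (star (v i) ⬝ᵥ M *ᵥ v i).re := fun i => by
    by_cases hv : v i = 0
    · simp [hv]
    · exact mul_nonneg (hp i) (hpos i hv).le
  have hsum : ∑ i, p i * (star (v i) ⬝ᵥ M *ᵥ v i).re = 0 := by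
    have := congrArg (fun A => (Matrix.trace A).re) hM
    simpa [Matrix.mul_sum, Matrix.trace_sum, trace_mul_projV, Complex.re_sum] using this
  refine Finset.sum_eq_zero fun i _ => ?_
  have hi := (Finset.sum_eq_zero_iff_of_nonneg fun i _ => hterm_nonneg i).mp hsum i
    (Finset.mem_univ i)
  by_cases hv : v i = 0
  · ext a b; simp [projV, hv]
  · simp [(mul_eq_zero.mp hi).resolve_right (hpos i hv).ne']

lemma pauli_mul_self (i : Fin 3) : pauli i * pauli i = 1 := by
  fin_cases i <;> ext a b <;> fin_cases a <;> fin_cases b <;> simp [pauli, Matrix.mul_apply]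

lemma pauli_anticomm {i j : Fin 3} (h : i ≠ j) :
    pauli i * pauli j = (-1 : ℂ) • (pauli j * pauli i) := by
  fin_cases i <;> fin_cases j <;> first | exact absurd rfl h |
    (ext a b; fin_cases a <;> fin_cases b <;> simp [pauli, Matrix.mul_apply])

lemma pauli_isHermitian (i : Fin 3) : (pauli i).IsHermitian := by
  fin_cases i <;> ext a b <;> fin_cases a <;> fin_cases b <;> simp [pauli]

noncomputable def blochVec (u : Fin 2 → ℂ) (i : Fin 3) : ℝ := (star u ⬝ᵥ pauli i *ᵥ u).re

lemma star_dotProduct_pauli_mulVec (u : Fin 2 → ℂ) (i : Fin 3) :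
    star u ⬝ᵥ pauli i *ᵥ u = blochVec u i :=
  star_dotProduct_mulVec_self_eq_re (pauli_isHermitian i) u

lemma sum_blochVec_sq (u : Fin 2 → ℂ) : ∑ i, blochVec u i ^ 2 = sqNorm u ^ 2 := by
  simp only [blochVec, sqNorm, pauli, Fin.sum_univ_three, Fin.sum_univ_two, dotProduct, mulVec,
    Pi.star_apply]
  simp only [Fin.isValue, RCLike.star_def, cons_val_zero, of_apply, cons_val', cons_val_fin_one,
    zero_mul, cons_val_one, one_mul, zero_add, add_zero, Complex.add_re, Complex.mul_re,
    Complex.conj_re, Complex.conj_im, neg_mul, sub_neg_eq_add, mul_neg, Complex.neg_re,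
    Complex.I_re, Complex.I_im, zero_sub, Complex.mul_im, neg_add_rev, neg_neg, cons_val]
  ring

noncomputable def pauliCorrelation : Tri 2 2 2 :=
  (1 : Mat 2) ⊗ₖ (pauli 0 ⊗ₖ pauli 0) + pauli 1 ⊗ₖ ((1 : Mat 2) ⊗ₖ pauli 1)
    + pauli 2 ⊗ₖ (pauli 2 ⊗ₖ (1 : Mat 2))

lemma pauliCorrelation_mul_self : pauliCorrelation * pauliCorrelation = (3 : ℝ) • 1 := by
  simp only [pauliCorrelation, add_mul, mul_add, ← mul_kronecker_mul, one_mul, mul_one,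
    pauli_mul_self, one_kronecker_one]
  rw [pauli_anticomm (by decide : (0 : Fin 3) ≠ 1), pauli_anticomm (by decide : (0 : Fin 3) ≠ 2),
    pauli_anticomm (by decide : (1 : Fin 3) ≠ 2)]
  simp only [smul_kronecker, kronecker_smul]
  module

lemma rhoQ_eq (q : ℝ) : rhoQ q = (1 / 8 : ℝ) • (1 + q • pauliCorrelation) := by
  rw [rhoQ, pauliCorrelation]
  module

lemma rhoQ_ne_zero (q : ℝ) (hq : 0 ≤ q) : rhoQ q ≠ 0 := by
  intro h
  have h000 : 8⁻¹ + 8⁻¹ * q = 0 := by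
    simpa [rhoQ, pauli] using congrArg (fun ρ : Tri 2 2 2 => (ρ (0, 0, 0) (0, 0, 0)).re) h
  linarith

lemma star_prod3_dotProduct_pauliCorrelation_mulVec (u v w : Fin 2 → ℂ) :
    star (prod3 u v w) ⬝ᵥ pauliCorrelation *ᵥ prod3 u v w
      = ((sqNorm u * blochVec v 0 * blochVec w 0 + blochVec u 1 * sqNorm v * blochVec w 1
          + blochVec u 2 * blochVec v 2 * sqNorm w : ℝ) : ℂ) := by
  simp only [pauliCorrelation, add_mulVec, dotProduct_add, star_prod3_dotProduct_kronecker_mulVec,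
    one_mulVec, star_dotProduct_self_eq_sqNorm, star_dotProduct_pauli_mulVec]
  push_cast
  ring

lemma correlation_le_three_halves {nu nv nw : ℝ} {a b c : Fin 3 → ℝ} (hu : 0 < nu) (hv : 0 < nv)
    (hw : 0 < nw) (ha : ∑ i, a i ^ 2 = nu ^ 2) (hb : ∑ i, b i ^ 2 = nv ^ 2)
    (hc : ∑ i, c i ^ 2 = nw ^ 2) :
    nu * b 0 * c 0 + a 1 * nv * c 1 + a 2 * b 2 * nw ≤ 3 / 2 * (nu * nv * nw) := by
  simp only [Fin.sum_univ_three] at ha hb hc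
  refine le_of_mul_le_mul_left (a := 2 * (nu * nv * nw)) ?_ (by positivity)
  -- `2xy ≤ x² + y²` on each of the three products, then the sphere identities
  nlinarith [sq_nonneg (nu * nw * b 0 - nu * nv * c 0), sq_nonneg (nv * nw * a 1 - nu * nv * c 1),
    sq_nonneg (nv * nw * a 2 - nu * nw * b 2), sq_nonneg (nu * nw * b 1), sq_nonneg (nu * nv * c 2),
    sq_nonneg (nv * nw * a 0), congrArg (fun t => (nv * nw) ^ 2 * t) ha,
    congrArg (fun t => (nu * nw) ^ 2 * t) hb, congrArg (fun t => (nu * nv) ^ 2 * t) hc]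

noncomputable def witness : Tri 2 2 2 := 1 - (1 / Real.sqrt 3) • pauliCorrelation

lemma witness_mul_rhoQ : witness * rhoQ (1 / Real.sqrt 3) = 0 := by
  have hq : 1 / Real.sqrt 3 * (1 / Real.sqrt 3 * 3) = 1 := by
    rw [← mul_assoc, one_div_mul_one_div, Real.mul_self_sqrt (by norm_num)]
    norm_num
  rw [witness, rhoQ_eq]
  simp only [Matrix.mul_smul, sub_mul, mul_add, one_mul, mul_one, Matrix.smul_mul,
    pauliCorrelation_mul_self, smul_smul]
  rw [hq]
  module

lemma re_star_prod3_dotProduct_witness_mulVec_pos {u v w : Fin 2 → ℂ} (hu : u ≠ 0) (hv : v ≠ 0)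
    (hw : w ≠ 0) : 0 < (star (prod3 u v w) ⬝ᵥ witness *ᵥ prod3 u v w).re := by
  have hT := correlation_le_three_halves (sqNorm_pos hu) (sqNorm_pos hv) (sqNorm_pos hw)
    (sum_blochVec_sq u) (sum_blochVec_sq v) (sum_blochVec_sq w)
  have hP : 0 < sqNorm u * sqNorm v * sqNorm w := by
    have := sqNorm_pos hu; have := sqNorm_pos hv; have := sqNorm_pos hw; positivity
  have hsqrt : 3 / 2 < Real.sqrt 3 := by
    rw [Real.lt_sqrt (by norm_num)]; norm_num
  rw [witness, sub_mulVec, dotProduct_sub, one_mulVec, smul_mulVec, dotProduct_smul,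
    star_dotProduct_self_eq_sqNorm, sqNorm_prod3, star_prod3_dotProduct_pauliCorrelation_mulVec]
  simp only [Complex.sub_re, Complex.ofReal_re, Complex.real_smul, Complex.mul_re,
    Complex.ofReal_im, zero_mul, sub_zero]
  rw [sub_pos, one_div_mul_eq_div, div_lt_iff₀ (by positivity)]
  nlinarith

/-- the range of ω_ABC = ρ_ABC(1/√3) contains no product vector,
hence ω_ABC is not fully separable. -/
theorem stmt_14 :
    (¬ ∃ (α β γ : Fin 2 → ℂ), α ≠ 0 ∧ β ≠ 0 ∧ γ ≠ 0 ∧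
      prod3 α β γ ∈ LinearMap.range (rhoQ (1 / Real.sqrt 3)).mulVecLin) ∧
    ¬ FullySepTri (rhoQ (1 / Real.sqrt 3)) := by
  constructor
  · rintro ⟨α, β, γ, hα, hβ, hγ, x, hx⟩
    have hker : witness *ᵥ prod3 α β γ = 0 := by
      rw [← hx, mulVecLin_apply, mulVec_mulVec, witness_mul_rhoQ, zero_mulVec]
    simpa [hker] using re_star_prod3_dotProduct_witness_mulVec_pos hα hβ hγ
  · rintro ⟨N, p, u, v, w, hp, hρ⟩
    refine rhoQ_ne_zero (1 / Real.sqrt 3) (by positivity) ?_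
    have hM := witness_mul_rhoQ
    rw [hρ] at hM ⊢
    refine sum_smul_projV_eq_zero_of_mul_eq_zero hp (fun i hi => ?_) hM
    obtain ⟨hu, hv, hw⟩ := ne_zero_of_prod3_ne_zero hi
    exact re_star_prod3_dotProduct_witness_mulVec_pos hu hv hw
end QMarginal
end
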